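/- In the field of rational functions ℚ(λ₁, λ₂), the identity (−λ₁−λ₂)¹⁵/(λ₁⁹λ₂⁷) · (1/8) − (λ₁+λ₂)¹⁵/(8λ₁¹⁹λ₂¹⁵) · P(λ₁,λ₂) + (λ₁+λ₂)²⁹/(8λ₁¹⁹λ₂¹⁵) · Q(λ₁,λ₂) = 0 holds, where P and Q are the explicit polynomials P(x,y) = 21x¹⁸ + 480x¹⁷y + 5012x¹⁶y² + 31776x¹⁵y³ + 137460x¹⁴y⁴ + 432208x¹³y⁵ + 1026480x¹²y⁶ + 1886976x¹¹y⁷ + 2726437x¹⁰y⁸ + 3123120x⁹y⁹ + 2845128x⁸y¹⁰ + 2057120x⁷y¹¹ + 1171716x⁶y¹² + 518448x⁵y¹³ + 174160x⁴y¹⁴ + 42816x³y¹⁵ + 7245x²y¹⁶ + 752xy¹⁷ + 36y¹⁸ and Q(x,y) = 21x⁴ + 186x³y + 497x²y² + 248xy³ + 36y⁴. -/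
import Mathlib


open MvPolynomial

/-- The degree-18 polynomial `P` from the local-curve computation for
`(l₁,l₂,l₃) = (8,6,-16)`. -/
noncomputable def P_local {K : Type*} [Field K] (x y : K) : K :=
  21*x^18 + 480*x^17*y + 5012*x^16*y^2 + 31776*x^15*y^3 + 137460*x^14*y^4 +
  432208*x^13*y^5 + 1026480*x^12*y^6 + 1886976*x^11*y^7 + 2726437*x^10*y^8 +
  3123120*x^9*y^9 + 2845128*x^8*y^10 + 2057120*x^7*y^11 + 1171716*x^6*y^12 +
  518448*x^5*y^13 + 174160*x^4*y^14 + 42816*x^3*y^15 + 7245*x^2*y^16 +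
  752*x*y^17 + 36*y^18

/-- The degree-4 polynomial `Q` from the Gromov–Witten side. -/
noncomputable def Q_local {K : Type*} [Field K] (x y : K) : K :=
  21*x^4 + 186*x^3*y + 497*x^2*y^2 + 248*x*y^3 + 36*y^4

set_option maxHeartbeats 4000000 in
/-- In `ℚ(λ₁,λ₂)`, the identity
`(1/8)·DT₄([C]) + DT₄(2[C]) - GW_{0,2[C]} = 0` for the local curve of degrees
`(8,6,-16)`. -/
theorem local_curve_86_conjecture_identity
    (l₁ l₂ : FractionRing (MvPolynomial (Fin 2) ℚ))
    (h₁ : l₁ = algebraMap (MvPolynomial (Fin 2) ℚ) _ (X 0))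
    (h₂ : l₂ = algebraMap (MvPolynomial (Fin 2) ℚ) _ (X 1)) :
    (-l₁ - l₂)^15 / (l₁^9 * l₂^7) * (1/8)
      - (l₁ + l₂)^15 / (8 * l₁^19 * l₂^15) * P_local l₁ l₂
      + (l₁ + l₂)^29 / (8 * l₁^19 * l₂^15) * Q_local l₁ l₂ = 0 := by
  have hn1 : l₁ ≠ 0 := by
    rw [h₁]
    simpa using (IsFractionRing.injective (MvPolynomial (Fin 2) ℚ)
      (FractionRing (MvPolynomial (Fin 2) ℚ))).ne (X_ne_zero (0 : Fin 2))
  have hn2 : l₂ ≠ 0 := by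
    rw [h₂]
    simpa using (IsFractionRing.injective (MvPolynomial (Fin 2) ℚ)
      (FractionRing (MvPolynomial (Fin 2) ℚ))).ne (X_ne_zero (1 : Fin 2))
  unfold P_local Q_local
  have hden : l₁ ^ 9 * l₂ ^ 7 * 8 * (8 * l₁ ^ 19 * l₂ ^ 15) ≠ 0 := by
    refine mul_ne_zero (mul_ne_zero (mul_ne_zero (pow_ne_zero _ hn1)
      (pow_ne_zero _ hn2)) (by norm_num)) ?_
    exact mul_ne_zero (mul_ne_zero (by norm_num) (pow_ne_zero _ hn1)) (pow_ne_zero _ hn2)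
  field_simp
  ring
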